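/- (Comparison of p_* and r_* in dimension n = 1.) Let μ1 > 0, 0 ≤ δ < 1, θ := θ(μ1), p_* := 1 + (3−√δ)/μ1, and define r_*(μ1,δ) := 1 + 2(2−√δ)/(1+μ1+√δ) if √δ < θ; r_*(μ1,δ) := 2/(1+θ) if √δ = θ; r_*(μ1,δ) := 2/(1+√δ) if √δ > θ. Then: if √δ < θ then p_* < r_*; if √δ = θ then p_* = r_*; and if √δ > θ then p_* > r_*. -/

import Mathlib

/-- `θ(μ1) := 1 + μ1/2 − (1/2)√(μ1²+16)`. -/
noncomputable def theta (μ1 : ℝ) : ℝ :=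
  1 + μ1 / 2 - Real.sqrt (μ1 ^ 2 + 16) / 2

/-- `r_*(μ1,δ)` from Theorem 1.5 in dimension `n = 1`. -/
noncomputable def rStar (μ1 δ : ℝ) : ℝ :=
  if Real.sqrt δ < theta μ1 then 1 + 2 * (2 - Real.sqrt δ) / (1 + μ1 + Real.sqrt δ)
  else if Real.sqrt δ = theta μ1 then 2 / (1 + theta μ1)
  else 2 / (1 + Real.sqrt δ)

/-!
Writing `s = √δ`, all three comparisons are governed by the sign of
`μ1 (1 - s) - (3 - s)(1 + s)`: clearing denominators, `r_* - p_*` has that sign in the first branch of `r_*` and the opposite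
sign in the other two. Squaring `√(μ1² + 16)` against `2 + μ1 - 2s > 0` shows that the same
quantity has the sign of `θ(μ1) - s`, since `(2 + μ1 - 2s)² - (μ1² + 16)` is four times it.
-/

section

variable {μ1 s : ℝ}

lemma lt_theta_iff (hμ : 0 ≤ μ1) (hs : s < 1) :
    s < theta μ1 ↔ (3 - s) * (1 + s) < μ1 * (1 - s) :=
  calc s < theta μ1 ↔ √(μ1 ^ 2 + 16) < 2 + μ1 - 2 * s := by
        unfold theta; constructor <;> intro h <;> linarith
    _ ↔ μ1 ^ 2 + 16 < (2 + μ1 - 2 * s) ^ 2 := Real.sqrt_lt' (by linarith)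
    _ ↔ (3 - s) * (1 + s) < μ1 * (1 - s) := by constructor <;> intro h <;> nlinarith

lemma theta_lt_iff (hμ : 0 ≤ μ1) (hs : s < 1) :
    theta μ1 < s ↔ μ1 * (1 - s) < (3 - s) * (1 + s) :=
  calc theta μ1 < s ↔ 2 + μ1 - 2 * s < √(μ1 ^ 2 + 16) := by
        unfold theta; constructor <;> intro h <;> linarith
    _ ↔ (2 + μ1 - 2 * s) ^ 2 < μ1 ^ 2 + 16 := Real.lt_sqrt (by linarith)
    _ ↔ μ1 * (1 - s) < (3 - s) * (1 + s) := by constructor <;> intro h <;> nlinarith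

lemma eq_theta_iff (hμ : 0 ≤ μ1) (hs : s < 1) :
    s = theta μ1 ↔ (3 - s) * (1 + s) = μ1 * (1 - s) := by
  rw [← not_iff_not, ← ne_eq, ← ne_eq, ne_iff_lt_or_gt, ne_iff_lt_or_gt, lt_theta_iff hμ hs,
    theta_lt_iff hμ hs]

lemma rStar_branch_sub_pStar (hμ : μ1 ≠ 0) (hden : 1 + μ1 + s ≠ 0) :
    1 + 2 * (2 - s) / (1 + μ1 + s) - (1 + (3 - s) / μ1) =
      (μ1 * (1 - s) - (3 - s) * (1 + s)) / (μ1 * (1 + μ1 + s)) := by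
  field_simp
  ring

lemma pStar_sub_two_div (hμ : μ1 ≠ 0) (hden : 1 + s ≠ 0) :
    1 + (3 - s) / μ1 - 2 / (1 + s) = ((3 - s) * (1 + s) - μ1 * (1 - s)) / (μ1 * (1 + s)) := by
  field_simp
  ring

end

theorem pStar_rStar_comparison_general (μ1 δ : ℝ) (hμ : 0 < μ1)
    (hδ1 : δ < 1) :
    (Real.sqrt δ < theta μ1 →
      1 + (3 - Real.sqrt δ) / μ1 < rStar μ1 δ) ∧
    (Real.sqrt δ = theta μ1 →
      1 + (3 - Real.sqrt δ) / μ1 = rStar μ1 δ) ∧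
    (theta μ1 < Real.sqrt δ →
      rStar μ1 δ < 1 + (3 - Real.sqrt δ) / μ1) := by
  have hs1 : √δ < 1 := (Real.sqrt_lt' one_pos).2 (by rwa [one_pow])
  refine ⟨fun h => ?_, fun h => ?_, fun h => ?_⟩
  · rw [rStar, if_pos h, ← sub_pos, rStar_branch_sub_pStar hμ.ne' (by positivity)]
    exact div_pos (sub_pos.2 ((lt_theta_iff hμ.le hs1).1 h)) (by positivity)
  · rw [rStar, if_neg h.not_lt, if_pos h, ← h, ← sub_eq_zero,
      pStar_sub_two_div hμ.ne' (by positivity), (eq_theta_iff hμ.le hs1).1 h, sub_self, zero_div]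
  · rw [rStar, if_neg h.not_gt, if_neg h.ne', ← sub_pos,
      pStar_sub_two_div hμ.ne' (by positivity)]
    exact div_pos (sub_pos.2 ((theta_lt_iff hμ.le hs1).1 h)) (by positivity)

/-- Comparison of `p_* = 1 + (3−√δ)/μ1` and `r_*` in dimension `n = 1`. -/
theorem pStar_rStar_comparison (μ1 δ : ℝ) (hμ : 0 < μ1) (hδ0 : 0 ≤ δ)
    (hδ1 : δ < 1) :
    (Real.sqrt δ < theta μ1 →
      1 + (3 - Real.sqrt δ) / μ1 < rStar μ1 δ) ∧
    (Real.sqrt δ = theta μ1 →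
      1 + (3 - Real.sqrt δ) / μ1 = rStar μ1 δ) ∧
    (theta μ1 < Real.sqrt δ →
      rStar μ1 δ < 1 + (3 - Real.sqrt δ) / μ1) :=
  pStar_rStar_comparison_general μ1 δ hμ hδ1
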